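/- If a weighted graph (Γ,μ) satisfies (p0), (VD) and (TC), then the Green kernel mean value property (MVG) is equivalent to the mean value inequality (MV), and either of them implies the Green kernel bound (g01): g^{B(x,R)}(y,x) ≤ C·E(x,R)/V(x,d(x,y)) for all R>0, x∈Γ and y with d(x,y)>0. -/

import Mathlib

open Classical

noncomputable section

/-- A weighted graph: symmetric nonnegative edge weights, zero on the diagonal,
positive exactly on edges, with finitely many neighbours at each vertex. -/
structure WeightedGraph (V : Type*) where
  w : V → V → ℝ
  w_symm : ∀ x y, w x y = w y x
  w_nonneg : ∀ x y, 0 ≤ w x y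
  w_irrefl : ∀ x, w x x = 0
  locFin : ∀ x, {y | 0 < w x y}.Finite

/-- A space-time scale function is proper. -/
def properF (F : ℕ → ℝ) : Prop :=
  StrictMono F ∧
  (∃ D : ℝ, 0 < D ∧ ∀ R : ℕ, F (2 * R) ≤ D * F R) ∧
  (∀ R S : ℕ, F R + F S ≤ F (R + S)) ∧
  (∃ (A : ℕ) (B : ℝ), 1 < A ∧ 1 < B ∧ ∀ R : ℕ, B * F R ≤ F (A * R)) ∧
  (∃ c : ℝ, 0 < c ∧ ∀ R : ℕ, c * (R : ℝ) ^ 2 ≤ F R)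

/-- A proper scale function satisfying the strong anti-doubling property `B_F > A_F`. -/
def veryProperF (F : ℕ → ℝ) : Prop :=
  properF F ∧
  (∃ (A : ℕ) (B : ℝ), 1 < A ∧ (A : ℝ) < B ∧ ∀ R : ℕ, B * F R ≤ F (A * R))

/-- The (generalized) inverse of a scale function. -/
def finvF (F : ℕ → ℝ) (t : ℝ) : ℕ := sInf {R : ℕ | t ≤ F R}

/-- The sub-Gaussian kernel `k(n,R)`: the maximal integer `k ≥ 1` with
`n/k ≤ F(⌊R/k⌋)`, and `0` if there is none. -/
def kkerF (F : ℕ → ℝ) (n R : ℕ) : ℕ :=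
  sSup {k : ℕ | 1 ≤ k ∧ (n : ℝ) / (k : ℝ) ≤ F (R / k)}

namespace WeightedGraph

variable {V : Type*}

/-- The underlying simple graph. -/
def toSimpleGraph (G : WeightedGraph V) : SimpleGraph V where
  Adj x y := 0 < G.w x y
  symm := by
    constructor
    intro x y h
    rw [G.w_symm y x]
    exact h
  loopless := by
    constructor
    intro x h
    rw [G.w_irrefl x] at h
    exact lt_irrefl 0 h

/-- The graph (shortest path) distance. -/
def gdist (G : WeightedGraph V) (x y : V) : ℕ := G.toSimpleGraph.dist x y

/-- The open metric ball `B(x,r) = {y : d(x,y) < r}`. -/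
def ball (G : WeightedGraph V) (x : V) (r : ℝ) : Set V := {y | (G.gdist x y : ℝ) < r}

/-- The sphere `S(x,R) = {y : d(x,y) = R}`. -/
def sphere (G : WeightedGraph V) (x : V) (R : ℕ) : Set V := {y | G.gdist x y = R}

/-- The external boundary of a set. -/
def extBoundary (G : WeightedGraph V) (A : Set V) : Set V :=
  {y | y ∉ A ∧ ∃ x ∈ A, 0 < G.w x y}

/-- The vertex measure `μ(x) = Σ_{y ∼ x} μ_{xy}`. -/
def mu (G : WeightedGraph V) (x : V) : ℝ := ∑' y, G.w x y

/-- The volume `V(x,r) = μ(B(x,r))`. -/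
def vol (G : WeightedGraph V) (x : V) (r : ℝ) : ℝ := ∑' y : G.ball x r, G.mu y.1

/-- The volume of the annulus `v(x,s,r) = V(x,r) - V(x,s)`. -/
def annv (G : WeightedGraph V) (x : V) (s r : ℝ) : ℝ := G.vol x r - G.vol x s

/-- One-step transition probability `P(x,y) = μ_{xy}/μ(x)`. -/
def Pstep (G : WeightedGraph V) (x y : V) : ℝ := G.w x y / G.mu x

/-- `n`-step transition probability. -/
def Pn (G : WeightedGraph V) : ℕ → V → V → ℝ
  | 0, x, y => if x = y then 1 else 0
  | n + 1, x, y => ∑' z, G.Pstep x z * Pn G n z y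

/-- The heat kernel `p_n(x,y) = P_n(x,y)/μ(y)`. -/
def hk (G : WeightedGraph V) (n : ℕ) (x y : V) : ℝ := G.Pn n x y / G.mu y

/-- One step of the walk killed on exiting `A`. -/
def PstepA (G : WeightedGraph V) (A : Set V) (x y : V) : ℝ :=
  if x ∈ A ∧ y ∈ A then G.Pstep x y else 0

/-- `n`-step transition probability of the killed walk. -/
def PnA (G : WeightedGraph V) (A : Set V) : ℕ → V → V → ℝ
  | 0, x, y => if x = y ∧ x ∈ A then 1 else 0
  | n + 1, x, y => ∑' z, G.PstepA A x z * PnA G A n z y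

/-- The local Green kernel `g^A(y,z) = (Σ_k P_k^A(y,z))/μ(z)`. -/
def green (G : WeightedGraph V) (A : Set V) (y z : V) : ℝ :=
  (∑' k, G.PnA A k y z) / G.mu z

/-- The mean exit time `E_z(A) = Σ_{k≥0} P_z(T_A > k) = Σ_k Σ_{y} P_k^A(z,y)`. -/
def meanExit (G : WeightedGraph V) (A : Set V) (z : V) : ℝ :=
  ∑' (k : ℕ), ∑' (y : V), G.PnA A k z y

/-- `E(x,r)`: the mean exit time from the ball `B(x,r)` started at `x`. -/
def mexit (G : WeightedGraph V) (x : V) (r : ℝ) : ℝ := G.meanExit (G.ball x r) x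

/-- `e(x,t) = min{R ∈ ℕ : E(x,R) ≥ t}`, the inverse of the mean exit time. -/
def einv (G : WeightedGraph V) (x : V) (t : ℝ) : ℕ := sInf {R : ℕ | t ≤ G.mexit x R}

/-- `P(T_A < n)` for the walk started at `z`. -/
def exitProbLT (G : WeightedGraph V) (A : Set V) (z : V) (n : ℕ) : ℝ :=
  1 - ∑' y, G.PnA A (n - 1) z y

/-- The local sub-Gaussian kernel `k̲(x,n,R)`. -/
def lker (G : WeightedGraph V) (x : V) (n R : ℕ) : ℕ :=
  sSup {k : ℕ | 1 ≤ k ∧ (n : ℝ) / (k : ℝ) ≤ ⨅ y : G.ball x R, G.mexit y.1 ((R / k : ℕ) : ℝ)}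

/-- `u` is harmonic on `A`. -/
def Harmonic (G : WeightedGraph V) (A : Set V) (u : V → ℝ) : Prop :=
  ∀ x ∈ A, (∑' y, G.Pstep x y * u y) = u x

/-- The Dirichlet form (energy). -/
def dirichletEnergy (G : WeightedGraph V) (f : V → ℝ) : ℝ :=
  (1 / 2) * ∑' p : V × V, G.w p.1 p.2 * (f p.1 - f p.2) ^ 2

/-- The resistance between two disjoint sets. -/
def resistance (G : WeightedGraph V) (A B : Set V) : ℝ :=
  (sInf (G.dirichletEnergy '' {f | (∀ x ∈ A, f x = 1) ∧ ∀ x ∈ B, f x = 0}))⁻¹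

/-- The resistance of the annulus `ρ(x,s,r) = ρ(B(x,s), Γ∖B(x,r))`. -/
def rho (G : WeightedGraph V) (x : V) (s r : ℝ) : ℝ :=
  G.resistance (G.ball x s) (G.ball x r)ᶜ

/-- The kernel of the `(λ,m)`-resolvent `((λ+1)I - P)^{-m}`. -/
def resolventKer (G : WeightedGraph V) (lam : ℝ) (m : ℕ) (x y : V) : ℝ :=
  (∑' k : ℕ, (Nat.choose (k + m - 1) k : ℝ) * (1 + lam) ^ (-((m : ℤ) + (k : ℤ))) * G.Pn k x y) /
    G.mu y

/-- `F(R) = inf_x E(x,R)`. -/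
def Fm (G : WeightedGraph V) (R : ℕ) : ℝ := ⨅ x : V, G.mexit x R

/-- Condition `(p0)`: controlled weights. -/
def P0 (G : WeightedGraph V) (p0 : ℝ) : Prop :=
  ∀ x y : V, 0 < G.w x y → p0 ≤ G.w x y / G.mu x

/-- Condition `(VD)`: volume doubling. -/
def VD (G : WeightedGraph V) : Prop :=
  ∃ D : ℝ, 0 < D ∧ ∀ (x : V) (R : ℝ), 0 < R → G.vol x (2 * R) ≤ D * G.vol x R

/-- Condition `(TC)`: the time comparison principle. -/
def TC (G : WeightedGraph V) : Prop :=
  ∃ C : ℝ, 1 < C ∧ ∀ (x : V) (R : ℝ), 0 < R → ∀ y ∈ G.ball x R,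
    G.mexit x (2 * R) ≤ C * G.mexit y R

/-- Condition `(TD)`: time doubling. -/
def TD (G : WeightedGraph V) : Prop :=
  ∃ D : ℝ, 0 < D ∧ ∀ (x : V) (R : ℝ), 0 ≤ R → G.mexit x (2 * R) ≤ D * G.mexit x R

/-- Condition `(E)`: the mean exit time is uniform in the space. -/
def UniformE (G : WeightedGraph V) : Prop :=
  ∃ C : ℝ, 1 < C ∧ ∀ (x y : V) (R : ℝ), 0 < R → G.mexit x R ≤ C * G.mexit y R

/-- The mean value inequality `(MV)`. -/
def MV (G : WeightedGraph V) : Prop :=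
  ∃ C : ℝ, 0 < C ∧ ∀ (x : V) (R : ℝ) (u : V → ℝ), 0 < R → (∀ y, 0 ≤ u y) →
    G.Harmonic (G.ball x R) u →
    u x ≤ C / G.vol x R * ∑' y : G.ball x R, u y.1 * G.mu y.1

/-- The local diagonal upper estimate `(DUE)`. -/
def DUE (G : WeightedGraph V) : Prop :=
  ∃ C : ℝ, 0 < C ∧ ∀ (x : V) (n : ℕ), 0 < n →
    G.hk n x x ≤ C / G.vol x (G.einv x n)

/-- The off-diagonal upper estimate `(UE)`. -/
def UE (G : WeightedGraph V) : Prop :=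
  ∃ C β c : ℝ, 0 < C ∧ 1 < β ∧ 0 < c ∧ ∀ (x y : V) (n : ℕ), 0 < n →
    G.hk n x y ≤ C / G.vol x (G.einv x n) *
      Real.exp (-(c * (G.mexit x (G.gdist x y) / n) ^ ((1 : ℝ) / (β - 1))))

/-- A nonnegative Dirichlet solution of the heat equation `P^A u_n = u_{n+1}` up to time `N`. -/
def DirSol (G : WeightedGraph V) (A : Set V) (N : ℕ) (u : ℕ → V → ℝ) : Prop :=
  (∀ n y, 0 ≤ u n y) ∧ ∀ n, n < N → ∀ z ∈ A, (∑' y, G.PstepA A z y * u n y) = u (n + 1) z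

/-- The parabolic mean value inequality `(PMV)`. -/
def PMV (G : WeightedGraph V) : Prop :=
  ∃ c1 c2 C : ℝ, 0 ≤ c1 ∧ c1 < c2 ∧ 1 < C ∧
    ∀ (x : V) (R : ℝ) (u : ℕ → V → ℝ), 0 < R →
      G.DirSol (G.ball x R) ⌊c2 * G.mexit x R⌋₊ u →
      u ⌊c2 * G.mexit x R⌋₊ x ≤ C / (G.vol x R * G.mexit x R) *
        ∑ i ∈ Finset.Icc ⌊c1 * G.mexit x R⌋₊ ⌊c2 * G.mexit x R⌋₊,
          ∑' y : G.ball x R, u i y.1 * G.mu y.1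

/-- The skewed parabolic mean value inequality. -/
def SPMV (G : WeightedGraph V) : Prop :=
  ∃ c1 c2 C : ℝ, 0 < c1 ∧ c1 < c2 ∧ 1 ≤ C ∧
    ∀ (x : V) (R : ℝ) (y : V) (u : ℕ → V → ℝ), 0 < R → y ∈ G.ball x R →
      G.DirSol (G.ball x R) ⌊c2 * G.mexit x R⌋₊ u →
      u ⌊c2 * G.mexit x R⌋₊ x ≤ C / (G.vol y (2 * R) * G.mexit y (2 * R)) *
        ∑ i ∈ Finset.Icc ⌊c1 * G.mexit x R⌋₊ ⌊c2 * G.mexit x R⌋₊,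
          ∑' z : G.ball x R, u i z.1 * G.mu z.1

/-- The mean value property for Green kernels `(MVG)`. -/
def MVG (G : WeightedGraph V) : Prop :=
  ∃ C : ℝ, 1 < C ∧ ∀ (x : V) (R : ℝ) (y : V), 0 < R → 0 < G.gdist x y →
    G.green (G.ball x R) y x ≤ C / G.vol x (G.gdist x y) *
      ∑' z : G.ball x (G.gdist x y : ℝ), G.green (G.ball x R) y z.1 * G.mu z.1

/-- The Green kernel bound `(g01)`: `g^B(y,x) ≤ C·E(x,R)/V(x,d(x,y))`. -/
def G01 (G : WeightedGraph V) : Prop :=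
  ∃ C : ℝ, 1 < C ∧ ∀ (x : V) (R : ℝ) (y : V), 0 < R → 0 < G.gdist x y →
    G.green (G.ball x R) y x ≤ C * G.mexit x R / G.vol x (G.gdist x y)

/-- The elliptic Harnack inequality `(H)`. -/
def EH (G : WeightedGraph V) : Prop :=
  ∃ C : ℝ, 0 < C ∧ ∀ (x : V) (R : ℝ) (u : V → ℝ), 0 < R → (∀ y, 0 ≤ u y) →
    G.Harmonic (G.ball x (2 * R)) u → ∀ y ∈ G.ball x R, ∀ z ∈ G.ball x R, u y ≤ C * u z

/-- The sub-Gaussian upper estimate `(UE_F)` with respect to `F`. -/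
def UEF (G : WeightedGraph V) (F : ℕ → ℝ) : Prop :=
  ∃ C c : ℝ, 0 < C ∧ 0 < c ∧ ∀ (x y : V) (n : ℕ), 0 < n →
    G.hk n x y ≤ C / G.vol x (finvF F n) *
      Real.exp (-(c * (kkerF F n (G.gdist x y) : ℝ)))

/-- The sub-Gaussian lower estimate `(LE_F)` with respect to `F`. -/
def LEF (G : WeightedGraph V) (F : ℕ → ℝ) : Prop :=
  ∃ c C : ℝ, 0 < c ∧ 0 < C ∧ ∀ (x y : V) (n : ℕ), 0 < n →
    c / G.vol x (finvF F n) * Real.exp (-(C * (kkerF F n (G.gdist x y) : ℝ))) ≤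
      G.hk n x y + G.hk (n + 1) x y

/-- The `F`-parabolic Harnack inequality. -/
def PHF (G : WeightedGraph V) (F : ℕ → ℝ) : Prop :=
  ∀ c1 c2 c3 c4 η : ℝ, 0 < c1 → c1 < c2 → c2 < c3 → c3 < c4 → 0 < η → η < 1 →
    ∃ CH : ℝ, 0 < CH ∧ ∀ (x : V) (R k : ℕ) (u : ℕ → V → ℝ), 0 < R →
      (∀ n y, 0 ≤ u n y) →
      (∀ n : ℕ, k ≤ n → (n : ℝ) < (k : ℝ) + F ⌊c4 * (R : ℝ)⌋₊ → ∀ z ∈ G.ball x R,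
        (∑' y, G.Pstep z y * u n y) = u (n + 1) z) →
      ∀ (nm np : ℕ), ∀ xm ∈ G.ball x (η * R), ∀ xp ∈ G.ball x (η * R),
        (k : ℝ) + F ⌊c1 * (R : ℝ)⌋₊ ≤ (nm : ℝ) → (nm : ℝ) ≤ (k : ℝ) + F ⌊c2 * (R : ℝ)⌋₊ →
        (k : ℝ) + F ⌊c3 * (R : ℝ)⌋₊ ≤ (np : ℝ) → (np : ℝ) ≤ (k : ℝ) + F ⌊c4 * (R : ℝ)⌋₊ →
        (G.gdist xm xp : ℝ) ≤ (np : ℝ) - (nm : ℝ) →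
        u nm xm ≤ CH * (u np xp + u (np + 1) xp)

end WeightedGraph

open WeightedGraph

/-!
Under (MV), the Green function `g^B(y, ·)` of `B = B(x, R)` is nonnegative and harmonic in
`B(x, d(x, y))`, which misses its pole `y`; (MV) on that ball is (MVG).

Conversely, a nonnegative `u` harmonic in `B` is the Green potential `u = G^B f` of
`f = (I - P^B) u ≥ 0`, and `f(w) ≠ 0` only if `w` has a neighbour outside `B`, so that
`d(x, w) ≥ R - 1`. For such `w`, (MVG), the symmetry of `g^B` and (VD) give
`g^B(w, x) ≤ C E_w(B) / V(x, R)` with `E_w(B) = Σ_z G^B(w, z)`; summing against `μ(w) f(w)` and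
using the symmetry once more gives back `Σ_z μ(z) u(z)`. Radii `R ≤ 2` need only (VD).

(MVG) also bounds `g^B(y, x)` by `C E_y(B) / V(x, d(x, y))`, and
`E_y(B) ≤ E(y, 2R) ≤ C_T E(x, R)` by (TC), which is (g01).

All these Green sums converge because the walk killed outside a finite set dies geometrically
fast: from every point it follows a path out of the set with positive probability.
-/

lemma summable_of_le_mul_shift {a : ℕ → ℝ} {N : ℕ} {c : ℝ} (hc : c < 1) (ha : ∀ n, 0 ≤ a n)
    (h : ∀ n, a (n + N) ≤ c * a n) : Summable a := by
  refine summable_of_sum_range_le (c := (∑ n ∈ Finset.range N, a n) / (1 - c)) ha fun m => ?_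
  have hshift : ∑ n ∈ Finset.range (N + m), a n ≤ ∑ n ∈ Finset.range N, a n +
      c * ∑ n ∈ Finset.range m, a n := by
    rw [Finset.sum_range_add, Finset.mul_sum]
    gcongr with n
    rw [add_comm]
    exact h n
  have hmono : ∑ n ∈ Finset.range m, a n ≤ ∑ n ∈ Finset.range (N + m), a n :=
    Finset.sum_le_sum_of_subset_of_nonneg (by simp) fun n _ _ => ha n
  rw [le_div_iff₀ (by linarith)]
  linarith

lemma tsum_subtype_eq_sum {α : Type*} {A : Set α} (hA : A.Finite) (f : α → ℝ) :
    ∑' y : A, f y = ∑ y ∈ hA.toFinset, f y := by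
  rw [← Finset.tsum_subtype]
  exact tsum_congr_set_coe f hA.coe_toFinset.symm

namespace WeightedGraph

variable {V : Type*} (G : WeightedGraph V) {A A' : Set V} {s : Finset V}

lemma support_w_finite (x : V) : (Function.support (G.w x)).Finite :=
  (G.locFin x).subset fun y hy => (G.w_nonneg x y).lt_of_ne' hy

lemma summable_w (x : V) : Summable (G.w x) :=
  summable_of_hasFiniteSupport (G.support_w_finite x)

lemma mu_nonneg (x : V) : 0 ≤ G.mu x :=
  tsum_nonneg (G.w_nonneg x)

lemma w_le_mu (x y : V) : G.w x y ≤ G.mu x :=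
  (G.summable_w x).le_tsum y fun z _ => G.w_nonneg x z

lemma mu_pos [Nontrivial V] (hconn : G.toSimpleGraph.Connected) (x : V) : 0 < G.mu x := by
  obtain ⟨y, hy⟩ := exists_ne x
  obtain ⟨p⟩ := hconn.preconnected x y
  cases p with
  | nil => exact absurd rfl hy
  | cons h _ => exact lt_of_lt_of_le h (G.w_le_mu x _)

lemma Pstep_nonneg (x y : V) : 0 ≤ G.Pstep x y :=
  div_nonneg (G.w_nonneg x y) (G.mu_nonneg x)

lemma Pstep_pos {x y : V} (h : 0 < G.w x y) : 0 < G.Pstep x y :=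
  div_pos h (h.trans_le (G.w_le_mu x y))

lemma summable_Pstep_mul (x : V) (f : V → ℝ) : Summable fun y => G.Pstep x y * f y :=
  summable_of_hasFiniteSupport <| (G.support_w_finite x).subset fun _ hy h =>
    hy (by simp [Pstep, h])

lemma mu_mul_Pstep (x y : V) : G.mu x * G.Pstep x y = G.w x y := by
  rcases (G.mu_nonneg x).eq_or_lt with h | h
  · rw [← h, zero_mul]
    exact (le_antisymm (h ▸ G.w_le_mu x y) (G.w_nonneg x y)).symm
  · exact mul_div_cancel₀ _ h.ne'

lemma sum_Pstep_le_one (x : V) (s : Finset V) : ∑ y ∈ s, G.Pstep x y ≤ 1 := by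
  simp only [Pstep, ← Finset.sum_div]
  exact div_le_one_of_le₀ (Summable.sum_le_tsum s (fun y _ => G.w_nonneg x y) (G.summable_w x))
    (G.mu_nonneg x)

lemma eq_or_exists_adj_gdist_lt (hconn : G.toSimpleGraph.Connected) (x y : V) :
    x = y ∨ ∃ z, 0 < G.w x z ∧ G.gdist z y < G.gdist x y := by
  obtain ⟨p, hp⟩ := hconn.exists_walk_length_eq_dist x y
  cases p with
  | nil => exact Or.inl rfl
  | cons h q =>
    refine Or.inr ⟨_, h, ?_⟩
    have := SimpleGraph.dist_le q
    rw [SimpleGraph.Walk.length_cons] at hp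
    unfold gdist
    omega

lemma finite_setOf_gdist_le (hconn : G.toSimpleGraph.Connected) (n : ℕ) (x : V) :
    {y | G.gdist x y ≤ n}.Finite := by
  induction n generalizing x with
  | zero =>
    refine (Set.finite_singleton x).subset fun y (hy : G.gdist x y ≤ 0) => ?_
    rcases G.eq_or_exists_adj_gdist_lt hconn x y with rfl | ⟨z, -, hz⟩
    · rfl
    · omega
  | succ n ih =>
    refine (((G.locFin x).biUnion fun z _ => ih z).insert x).subset
      fun y (hy : G.gdist x y ≤ n + 1) => ?_
    rcases G.eq_or_exists_adj_gdist_lt hconn x y with rfl | ⟨z, hxz, hz⟩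
    · exact Set.mem_insert _ _
    · exact Set.mem_insert_of_mem _ (Set.mem_biUnion hxz (show _ ≤ n by omega))

lemma ball_finite (hconn : G.toSimpleGraph.Connected) (x : V) (r : ℝ) : (G.ball x r).Finite :=
  (G.finite_setOf_gdist_le hconn ⌈r⌉₊ x).subset fun _ (hy : _ < r) =>
    by exact_mod_cast (hy.trans_le (Nat.le_ceil r)).le

lemma ball_mono (x : V) {r r' : ℝ} (h : r ≤ r') : G.ball x r ⊆ G.ball x r' :=
  fun _ hy => lt_of_lt_of_le hy h

lemma mem_ball_self {r : ℝ} (x : V) (hr : 0 < r) : x ∈ G.ball x r := by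
  simpa [ball, gdist] using hr

lemma mem_ball_comm {x y : V} {r : ℝ} : x ∈ G.ball y r ↔ y ∈ G.ball x r := by
  show (G.gdist y x : ℝ) < r ↔ (G.gdist x y : ℝ) < r
  rw [gdist, gdist, SimpleGraph.dist_comm]

lemma ball_subset_ball_of_mem (hconn : G.toSimpleGraph.Connected) {x y : V} {R : ℝ}
    (hy : y ∈ G.ball x R) : G.ball x R ⊆ G.ball y (2 * R) := fun z (hz : _ < R) => by
  have htri : (G.gdist y z : ℝ) ≤ G.gdist y x + G.gdist x z := by
    exact_mod_cast hconn.dist_triangle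
  have hyx : (G.gdist y x : ℝ) < R := G.mem_ball_comm.mpr hy
  show (G.gdist y z : ℝ) < 2 * R
  linarith

lemma ball_one (hconn : G.toSimpleGraph.Connected) (x : V) : G.ball x 1 = {x} := by
  ext y
  simp [ball, gdist, hconn.dist_eq_zero_iff, eq_comm]

lemma gdist_le_add_one_of_adj (hconn : G.toSimpleGraph.Connected) (x : V) {y z : V}
    (h : 0 < G.w y z) : G.gdist x z ≤ G.gdist x y + 1 :=
  hconn.dist_triangle.trans_eq (congrArg _ (SimpleGraph.dist_eq_one_iff_adj.mpr h))

lemma vol_eq_sum (hconn : G.toSimpleGraph.Connected) (x : V) (r : ℝ) :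
    G.vol x r = ∑ y ∈ (G.ball_finite hconn x r).toFinset, G.mu y :=
  tsum_subtype_eq_sum _ _

lemma vol_nonneg (x : V) (r : ℝ) : 0 ≤ G.vol x r :=
  tsum_nonneg fun y => G.mu_nonneg y

lemma vol_mono (hconn : G.toSimpleGraph.Connected) (x : V) {r r' : ℝ} (h : r ≤ r') :
    G.vol x r ≤ G.vol x r' := by
  rw [G.vol_eq_sum hconn, G.vol_eq_sum hconn]
  exact Finset.sum_le_sum_of_subset_of_nonneg (by simpa using G.ball_mono x h)
    fun y _ _ => G.mu_nonneg y

lemma vol_pos [Nontrivial V] (hconn : G.toSimpleGraph.Connected) (x : V) {r : ℝ} (hr : 0 < r) :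
    0 < G.vol x r := by
  rw [G.vol_eq_sum hconn]
  exact Finset.sum_pos' (fun y _ => G.mu_nonneg y)
    ⟨x, by simpa using G.mem_ball_self x hr, G.mu_pos hconn x⟩

lemma vol_one (hconn : G.toSimpleGraph.Connected) (x : V) : G.vol x 1 = G.mu x := by
  rw [vol, G.ball_one hconn]
  exact tsum_singleton x G.mu

lemma PstepA_nonneg (x y : V) : 0 ≤ G.PstepA A x y := by
  unfold PstepA
  split_ifs
  exacts [G.Pstep_nonneg x y, le_rfl]

lemma PstepA_of_mem {x y : V} (hx : x ∈ A) (hy : y ∈ A) : G.PstepA A x y = G.Pstep x y :=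
  if_pos ⟨hx, hy⟩

lemma PstepA_of_notMem_left {x : V} (hx : x ∉ A) (y : V) : G.PstepA A x y = 0 := by
  simp [PstepA, hx]

lemma PstepA_of_notMem_right {y : V} (hy : y ∉ A) (x : V) : G.PstepA A x y = 0 := by
  simp [PstepA, hy]

lemma PstepA_le_Pstep (x y : V) : G.PstepA A x y ≤ G.Pstep x y := by
  unfold PstepA
  split_ifs
  exacts [le_rfl, G.Pstep_nonneg x y]

lemma PstepA_mono (h : A ⊆ A') (x y : V) : G.PstepA A x y ≤ G.PstepA A' x y := by
  by_cases hxy : x ∈ A ∧ y ∈ A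
  · rw [G.PstepA_of_mem hxy.1 hxy.2, G.PstepA_of_mem (h hxy.1) (h hxy.2)]
  · rw [PstepA, if_neg hxy]
    exact G.PstepA_nonneg x y

lemma mu_mul_PstepA_comm (x y : V) : G.mu x * G.PstepA A x y = G.mu y * G.PstepA A y x := by
  unfold PstepA
  by_cases h : x ∈ A ∧ y ∈ A
  · rw [if_pos h, if_pos h.symm, mu_mul_Pstep, mu_mul_Pstep, w_symm]
  · rw [if_neg h, if_neg fun h' => h h'.symm, mul_zero, mul_zero]

lemma PnA_zero (x y : V) : G.PnA A 0 x y = if x = y ∧ x ∈ A then 1 else 0 := rfl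

lemma PnA_nonneg (n : ℕ) (x y : V) : 0 ≤ G.PnA A n x y := by
  induction n generalizing x with
  | zero => rw [PnA_zero]; split_ifs <;> norm_num
  | succ n ih => exact tsum_nonneg fun z => mul_nonneg (G.PstepA_nonneg x z) (ih z)

lemma PnA_of_notMem_left {x : V} (hx : x ∉ A) (n : ℕ) (y : V) : G.PnA A n x y = 0 := by
  cases n with
  | zero => exact if_neg fun h => hx h.2
  | succ n => simp [PnA, G.PstepA_of_notMem_left hx]

lemma PnA_of_notMem_right {y : V} (hy : y ∉ A) (n : ℕ) (x : V) : G.PnA A n x y = 0 := by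
  induction n generalizing x with
  | zero => exact if_neg fun ⟨hxy, hx⟩ => hy (hxy ▸ hx)
  | succ n ih => simp [PnA, ih]

lemma PnA_succ (hs : A ⊆ s) (n : ℕ) (x y : V) :
    G.PnA A (n + 1) x y = ∑ z ∈ s, G.PstepA A x z * G.PnA A n z y :=
  tsum_eq_sum fun z hz => by rw [G.PstepA_of_notMem_right fun h => hz (hs h), zero_mul]

lemma PnA_one (x y : V) : G.PnA A 1 x y = G.PstepA A x y := by
  rw [PnA, tsum_eq_single y fun z hz => by simp [PnA_zero, hz]]
  by_cases hy : y ∈ A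
  · simp [PnA_zero, hy]
  · simp [PnA_zero, hy, G.PstepA_of_notMem_right hy]

lemma PnA_succ_right (hs : A ⊆ s) (n : ℕ) (x y : V) :
    G.PnA A (n + 1) x y = ∑ z ∈ s, G.PnA A n x z * G.PstepA A z y := by
  induction n generalizing x with
  | zero =>
    rw [PnA_one]
    by_cases hx : x ∈ A
    · rw [Finset.sum_eq_single x (fun z _ hz => by simp [PnA_zero, Ne.symm hz])
        fun h => absurd (hs hx) h]
      simp [PnA_zero, hx]
    · simp [G.PnA_of_notMem_left hx, G.PstepA_of_notMem_left hx]
  | succ n ih =>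
    calc G.PnA A (n + 2) x y
        = ∑ z ∈ s, G.PstepA A x z * ∑ w ∈ s, G.PnA A n z w * G.PstepA A w y := by
          simp only [G.PnA_succ hs (n + 1), ih]
      _ = ∑ w ∈ s, (∑ z ∈ s, G.PstepA A x z * G.PnA A n z w) * G.PstepA A w y := by
          simp only [Finset.mul_sum, Finset.sum_mul, mul_assoc]
          exact Finset.sum_comm
      _ = ∑ w ∈ s, G.PnA A (n + 1) x w * G.PstepA A w y := by
          simp only [G.PnA_succ hs n]

lemma mu_mul_PnA_comm (hs : A ⊆ s) (n : ℕ) (x y : V) :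
    G.mu x * G.PnA A n x y = G.mu y * G.PnA A n y x := by
  induction n generalizing x y with
  | zero =>
    by_cases hxy : x = y
    · rw [hxy]
    · simp [PnA_zero, hxy, Ne.symm hxy]
  | succ n ih =>
    rw [G.PnA_succ hs, G.PnA_succ_right hs, Finset.mul_sum, Finset.mul_sum]
    refine Finset.sum_congr rfl fun z _ => ?_
    linear_combination G.PnA A n z y * G.mu_mul_PstepA_comm x z + G.PstepA A z x * ih z y

lemma PnA_mono (hs : A' ⊆ s) (h : A ⊆ A') (n : ℕ) (x y : V) :
    G.PnA A n x y ≤ G.PnA A' n x y := by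
  induction n generalizing x with
  | zero =>
    simp only [PnA_zero]
    split_ifs with h₁ h₂
    exacts [le_rfl, absurd ⟨h₁.1, h h₁.2⟩ h₂, zero_le_one, le_rfl]
  | succ n ih =>
    rw [G.PnA_succ (h.trans hs), G.PnA_succ hs]
    exact Finset.sum_le_sum fun z _ =>
      mul_le_mul (G.PstepA_mono h x z) (ih z) (G.PnA_nonneg n z y) (G.PstepA_nonneg x z)

/-- `P_x(T_A > n)`. -/
def survival (A : Set V) (n : ℕ) (x : V) : ℝ := ∑' y, G.PnA A n x y

lemma survival_eq_sum (hs : A ⊆ s) (n : ℕ) (x : V) :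
    G.survival A n x = ∑ y ∈ s, G.PnA A n x y :=
  tsum_eq_sum fun _ hy => G.PnA_of_notMem_right (fun h => hy (hs h)) n x

lemma survival_nonneg (n : ℕ) (x : V) : 0 ≤ G.survival A n x :=
  tsum_nonneg fun y => G.PnA_nonneg n x y

lemma survival_of_notMem {x : V} (hx : x ∉ A) (n : ℕ) : G.survival A n x = 0 := by
  simp [survival, G.PnA_of_notMem_left hx]

lemma survival_zero_of_mem {x : V} (hx : x ∈ A) : G.survival A 0 x = 1 := by
  rw [survival, tsum_eq_single x fun y hy => by simp [PnA_zero, Ne.symm hy]]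
  simp [PnA_zero, hx]

lemma PnA_le_survival (hs : A ⊆ s) (n : ℕ) (x y : V) : G.PnA A n x y ≤ G.survival A n x := by
  by_cases hy : y ∈ A
  · rw [G.survival_eq_sum hs]
    exact Finset.single_le_sum (fun z _ => G.PnA_nonneg n x z) (hs hy)
  · rw [G.PnA_of_notMem_right hy]
    exact G.survival_nonneg n x

lemma survival_succ (hs : A ⊆ s) (n : ℕ) (x : V) :
    G.survival A (n + 1) x = ∑ z ∈ s, G.PstepA A x z * G.survival A n z := by
  simp only [G.survival_eq_sum hs, G.PnA_succ hs, Finset.mul_sum]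
  exact Finset.sum_comm

lemma survival_le_one (hs : A ⊆ s) (n : ℕ) (x : V) : G.survival A n x ≤ 1 := by
  induction n generalizing x with
  | zero =>
    by_cases hx : x ∈ A
    · rw [G.survival_zero_of_mem hx]
    · rw [G.survival_of_notMem hx]
      exact zero_le_one
  | succ n ih =>
    calc G.survival A (n + 1) x = ∑ z ∈ s, G.PstepA A x z * G.survival A n z :=
          G.survival_succ hs n x
      _ ≤ ∑ z ∈ s, G.Pstep x z := Finset.sum_le_sum fun z _ =>
          (mul_le_of_le_one_right (G.PstepA_nonneg x z) (ih z)).trans (G.PstepA_le_Pstep x z)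
      _ ≤ 1 := G.sum_Pstep_le_one x s

lemma survival_add_le (hs : A ⊆ s) {m : ℕ} {c : ℝ} (hc : ∀ z, G.survival A m z ≤ c) (n : ℕ)
    (x : V) : G.survival A (n + m) x ≤ c * G.survival A n x := by
  induction n generalizing x with
  | zero =>
    by_cases hx : x ∈ A
    · simpa [G.survival_zero_of_mem hx] using hc x
    · simp [G.survival_of_notMem hx]
  | succ n ih =>
    rw [add_right_comm, G.survival_succ hs, G.survival_succ hs, Finset.mul_sum]
    exact Finset.sum_le_sum fun z _ => by
      rw [mul_left_comm]
      exact mul_le_mul_of_nonneg_left (ih z) (G.PstepA_nonneg x z)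

lemma survival_lt_one_of_walk (hs : A ⊆ s) {x b : V} (p : G.toSimpleGraph.Walk x b)
    (hb : b ∉ A) {n : ℕ} (hn : p.length ≤ n) : G.survival A n x < 1 := by
  induction p generalizing n with
  | nil => simp [G.survival_of_notMem hb]
  | @cons x z b h q ih =>
    obtain ⟨m, rfl⟩ : ∃ m, n = m + 1 := ⟨n - 1, by simp at hn; omega⟩
    by_cases hx : x ∈ A
    · have hstep : ∀ y ∈ s, G.PstepA A x y * G.survival A m y = G.Pstep x y * G.survival A m y :=
        fun y _ => by
          by_cases hy : y ∈ A
          · rw [G.PstepA_of_mem hx hy]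
          · simp [G.survival_of_notMem hy]
      rw [G.survival_succ hs, Finset.sum_congr rfl hstep,
        ← Finset.sum_insert_of_eq_zero_if_notMem (a := z) fun hz => by
          rw [G.survival_of_notMem fun h => hz (hs h), mul_zero]]
      calc ∑ y ∈ insert z s, G.Pstep x y * G.survival A m y
          < ∑ y ∈ insert z s, G.Pstep x y :=
            Finset.sum_lt_sum
              (fun y _ => mul_le_of_le_one_right (G.Pstep_nonneg x y) (G.survival_le_one hs m y))
              ⟨z, Finset.mem_insert_self z s,
                mul_lt_of_lt_one_right (G.Pstep_pos h) (ih hb (by simp at hn; omega))⟩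
        _ ≤ 1 := G.sum_Pstep_le_one x _
    · simp [G.survival_of_notMem hx]

lemma exists_survival_le_lt_one [Infinite V] (hconn : G.toSimpleGraph.Connected) (hs : A ⊆ s) :
    ∃ N c, c < 1 ∧ ∀ x, G.survival A N x ≤ c := by
  obtain ⟨b, hb⟩ := (s.finite_toSet.subset hs).infinite_compl.nonempty
  set N := s.sup fun x => G.gdist x b
  have hlt : ∀ x ∈ s, G.survival A N x < 1 := fun x hx => by
    obtain ⟨p, hp⟩ := hconn.exists_walk_length_eq_dist x b
    exact G.survival_lt_one_of_walk hs p hb (hp ▸ Finset.le_sup (f := fun x => G.gdist x b) hx)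
  set t := insert 0 (s.image (G.survival A N))
  refine ⟨N, t.max' (Finset.insert_nonempty _ _), ?_, fun x => ?_⟩
  · simpa [t, Finset.max'_lt_iff] using hlt
  · by_cases hx : x ∈ A
    · exact t.le_max' _ (Finset.mem_insert_of_mem (Finset.mem_image_of_mem _ (hs hx)))
    · rw [G.survival_of_notMem hx]
      exact t.le_max' _ (Finset.mem_insert_self 0 _)

lemma summable_survival [Infinite V] (hconn : G.toSimpleGraph.Connected) (hs : A ⊆ s) (x : V) :
    Summable fun n => G.survival A n x := by
  obtain ⟨N, c, hc, hN⟩ := G.exists_survival_le_lt_one hconn hs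
  exact summable_of_le_mul_shift hc (fun n => G.survival_nonneg n x)
    fun n => G.survival_add_le hs hN n x

lemma summable_PnA [Infinite V] (hconn : G.toSimpleGraph.Connected) (hs : A ⊆ s) (x y : V) :
    Summable fun n => G.PnA A n x y :=
  (G.summable_survival hconn hs x).of_nonneg_of_le (fun n => G.PnA_nonneg n x y)
    fun n => G.PnA_le_survival hs n x y

/-- `G^A(y,z)`. -/
def expectedVisits (A : Set V) (y z : V) : ℝ := ∑' k, G.PnA A k y z

lemma green_eq_div (y z : V) : G.green A y z = G.expectedVisits A y z / G.mu z := rfl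

lemma expectedVisits_nonneg (y z : V) : 0 ≤ G.expectedVisits A y z :=
  tsum_nonneg fun k => G.PnA_nonneg k y z

lemma green_nonneg (y z : V) : 0 ≤ G.green A y z :=
  div_nonneg (G.expectedVisits_nonneg y z) (G.mu_nonneg z)

lemma expectedVisits_of_notMem_left {y : V} (hy : y ∉ A) (z : V) :
    G.expectedVisits A y z = 0 := by
  simp [expectedVisits, G.PnA_of_notMem_left hy]

lemma green_of_notMem_left {y : V} (hy : y ∉ A) (z : V) : G.green A y z = 0 := by
  rw [green_eq_div, G.expectedVisits_of_notMem_left hy, zero_div]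

lemma meanExit_nonneg (x : V) : 0 ≤ G.meanExit A x :=
  tsum_nonneg fun n => G.survival_nonneg n x

lemma mu_mul_expectedVisits_comm (hs : A ⊆ s) (y z : V) :
    G.mu y * G.expectedVisits A y z = G.mu z * G.expectedVisits A z y := by
  simp only [expectedVisits, ← tsum_mul_left, G.mu_mul_PnA_comm hs]

lemma green_comm [Nontrivial V] (hconn : G.toSimpleGraph.Connected) (hs : A ⊆ s) (y z : V) :
    G.green A y z = G.green A z y := by
  rw [green_eq_div, green_eq_div, div_eq_div_iff (G.mu_pos hconn z).ne' (G.mu_pos hconn y).ne',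
    mul_comm, G.mu_mul_expectedVisits_comm hs, mul_comm]

lemma expectedVisits_eq_mu_mul_green [Nontrivial V] (hconn : G.toSimpleGraph.Connected)
    (hs : A ⊆ s) (x w : V) : G.expectedVisits A x w = G.mu w * G.green A w x := by
  rw [green_eq_div, mul_div_assoc', eq_div_iff (G.mu_pos hconn x).ne',
    ← G.mu_mul_expectedVisits_comm hs, mul_comm]

lemma expectedVisits_eq [Infinite V] (hconn : G.toSimpleGraph.Connected) (hs : A ⊆ s)
    (y z : V) : G.expectedVisits A y z =
      G.PnA A 0 y z + ∑ w ∈ s, G.PstepA A y w * G.expectedVisits A w z := by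
  rw [expectedVisits, (G.summable_PnA hconn hs y z).tsum_eq_zero_add]
  simp only [G.PnA_succ hs, expectedVisits, ← tsum_mul_left]
  rw [Summable.tsum_finsetSum fun w _ => (G.summable_PnA hconn hs w z).mul_left _]

lemma harmonic_green [Infinite V] (hconn : G.toSimpleGraph.Connected) (hs : A ⊆ s)
    {S : Set V} (hSA : S ⊆ A) {y : V} (hy : y ∉ S) : G.Harmonic S (G.green A y) := by
  intro z hz
  have hzy : z ≠ y := fun h => hy (h ▸ hz)
  have hterm : ∀ w ∈ s, G.Pstep z w * G.expectedVisits A w y =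
      G.PstepA A z w * G.expectedVisits A w y := fun w _ => by
    by_cases hw : w ∈ A
    · rw [G.PstepA_of_mem (hSA hz) hw]
    · simp [G.expectedVisits_of_notMem_left hw]
  simp only [G.green_comm hconn hs y, green_eq_div, mul_div_assoc', tsum_div_const]
  congr 1
  rw [tsum_eq_sum (s := s) fun w hw => by
      rw [G.expectedVisits_of_notMem_left fun h => hw (hs h), mul_zero],
    Finset.sum_congr rfl hterm, G.expectedVisits_eq hconn hs z y, PnA_zero,
    if_neg fun h => hzy h.1, zero_add]

lemma sum_expectedVisits_eq_meanExit [Infinite V] (hconn : G.toSimpleGraph.Connected)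
    (hs : A ⊆ s) (y : V) : ∑ z ∈ s, G.expectedVisits A y z = G.meanExit A y := by
  simp only [expectedVisits, meanExit, ← Summable.tsum_finsetSum fun z _ =>
    G.summable_PnA hconn hs y z, ← G.survival_eq_sum hs, survival]

lemma sum_expectedVisits_le_meanExit [Infinite V] (hconn : G.toSimpleGraph.Connected)
    (hA : A.Finite) (t : Finset V) (y : V) : ∑ z ∈ t, G.expectedVisits A y z ≤ G.meanExit A y := by
  rw [← G.sum_expectedVisits_eq_meanExit hconn (s := t ∪ hA.toFinset) (by simp)]
  exact Finset.sum_le_sum_of_subset_of_nonneg Finset.subset_union_left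
    fun z _ _ => G.expectedVisits_nonneg y z

lemma meanExit_mono [Infinite V] (hconn : G.toSimpleGraph.Connected) (hs : A' ⊆ s) (h : A ⊆ A')
    (x : V) : G.meanExit A x ≤ G.meanExit A' x :=
  Summable.tsum_le_tsum
    (fun n => by
      rw [← survival, ← survival, G.survival_eq_sum (h.trans hs), G.survival_eq_sum hs]
      exact Finset.sum_le_sum fun y _ => G.PnA_mono hs h n x y)
    (G.summable_survival hconn (h.trans hs) x) (G.summable_survival hconn hs x)

/-- `(I - P^A) u`. -/
def laplacianA (A : Set V) (u : V → ℝ) (x : V) : ℝ := u x - ∑' y, G.PstepA A x y * u y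

lemma laplacianA_eq (hs : A ⊆ s) (u : V → ℝ) (x : V) :
    G.laplacianA A u x = u x - ∑ y ∈ s, G.PstepA A x y * u y := by
  rw [laplacianA, tsum_eq_sum fun y hy => by rw [G.PstepA_of_notMem_right fun h => hy (hs h),
    zero_mul]]

lemma sum_PnA_mul_laplacianA (hs : A ⊆ s) (u : V → ℝ) (n : ℕ) (x : V) :
    ∑ w ∈ s, G.PnA A n x w * G.laplacianA A u w =
      ∑ w ∈ s, G.PnA A n x w * u w - ∑ w ∈ s, G.PnA A (n + 1) x w * u w := by
  simp only [G.laplacianA_eq hs, mul_sub, Finset.sum_sub_distrib, G.PnA_succ_right hs,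
    Finset.mul_sum, Finset.sum_mul, mul_assoc]
  rw [Finset.sum_comm (s := s) (t := s)]

lemma eq_sum_expectedVisits_mul_laplacianA [Infinite V] (hconn : G.toSimpleGraph.Connected)
    (hs : A ⊆ s) (u : V → ℝ) {x : V} (hx : x ∈ A) :
    u x = ∑ w ∈ s, G.expectedVisits A x w * G.laplacianA A u w := by
  set r : ℕ → ℝ := fun n => ∑ w ∈ s, G.PnA A n x w * u w
  have hr0 : r 0 = u x := by
    rw [show r 0 = ∑ w ∈ s, G.PnA A 0 x w * u w from rfl,
      Finset.sum_eq_single_of_mem x (hs hx) fun w _ hw => by simp [PnA_zero, Ne.symm hw]]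
    simp [PnA_zero, hx]
  have hr : Filter.Tendsto r Filter.atTop (nhds 0) := by
    simpa using tendsto_finsetSum s fun w _ =>
      (G.summable_PnA hconn hs x w).tendsto_atTop_zero.mul_const (u w)
  have hpartial : Filter.Tendsto (fun n => ∑ k ∈ Finset.range n,
      ∑ w ∈ s, G.PnA A k x w * G.laplacianA A u w) Filter.atTop (nhds (u x)) := by
    simp only [G.sum_PnA_mul_laplacianA hs, Finset.sum_range_sub', ← hr0]
    simpa using (tendsto_const_nhds (x := r 0)).sub hr
  have hsum : HasSum (fun k => ∑ w ∈ s, G.PnA A k x w * G.laplacianA A u w)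
      (∑ w ∈ s, G.expectedVisits A x w * G.laplacianA A u w) :=
    hasSum_sum fun w _ => (G.summable_PnA hconn hs x w).hasSum.mul_right _
  exact tendsto_nhds_unique hpartial hsum.tendsto_sum_nat

lemma sum_mu_mul_laplacianA_mul_meanExit [Infinite V] (hconn : G.toSimpleGraph.Connected)
    (hA : A.Finite) (u : V → ℝ) :
    ∑ w ∈ hA.toFinset, G.mu w * G.laplacianA A u w * G.meanExit A w =
      ∑ z ∈ hA.toFinset, G.mu z * u z := by
  have hs : A ⊆ hA.toFinset := hA.coe_toFinset.ge
  calc ∑ w ∈ hA.toFinset, G.mu w * G.laplacianA A u w * G.meanExit A w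
      = ∑ z ∈ hA.toFinset, ∑ w ∈ hA.toFinset,
          G.mu w * G.expectedVisits A w z * G.laplacianA A u w := by
        simp only [← G.sum_expectedVisits_eq_meanExit hconn hs, Finset.mul_sum]
        rw [Finset.sum_comm]
        exact Finset.sum_congr rfl fun _ _ => Finset.sum_congr rfl fun _ _ => by ring
    _ = ∑ z ∈ hA.toFinset, G.mu z * u z := by
        refine Finset.sum_congr rfl fun z hz => ?_
        rw [G.eq_sum_expectedVisits_mul_laplacianA hconn hs u (hA.mem_toFinset.mp hz),
          Finset.mul_sum]
        exact Finset.sum_congr rfl fun w _ => by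
          rw [G.mu_mul_expectedVisits_comm hs, mul_assoc]

lemma laplacianA_nonneg_of_harmonic (hs : A ⊆ s) {u : V → ℝ} (hu : ∀ y, 0 ≤ u y)
    (hharm : G.Harmonic A u) {x : V} (hx : x ∈ A) : 0 ≤ G.laplacianA A u x := by
  rw [G.laplacianA_eq hs, sub_nonneg]
  calc ∑ y ∈ s, G.PstepA A x y * u y ≤ ∑ y ∈ s, G.Pstep x y * u y :=
        Finset.sum_le_sum fun y _ => mul_le_mul_of_nonneg_right (G.PstepA_le_Pstep x y) (hu y)
    _ ≤ ∑' y, G.Pstep x y * u y := Summable.sum_le_tsum s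
        (fun y _ => mul_nonneg (G.Pstep_nonneg x y) (hu y)) (G.summable_Pstep_mul x u)
    _ = u x := hharm x hx

lemma laplacianA_eq_zero_of_harmonic {u : V → ℝ} (hharm : G.Harmonic A u) {x : V} (hx : x ∈ A)
    (hnbr : ∀ y, 0 < G.w x y → y ∈ A) : G.laplacianA A u x = 0 := by
  rw [laplacianA, sub_eq_zero, ← hharm x hx]
  refine (tsum_congr fun y => ?_).symm
  by_cases hy : y ∈ A
  · rw [G.PstepA_of_mem hx hy]
  · have hw : G.w x y = 0 := ((G.w_nonneg x y).eq_of_not_lt fun h => hy (hnbr y h)).symm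
    simp [PstepA, hy, Pstep, hw]

/-- (MVG) with the Green mass of `B(x, d(x, y))` enlarged to the mean exit time from `B(x, R)`. -/
def GreenExitBound (C : ℝ) : Prop :=
  ∀ (x : V) (R : ℝ) (y : V), 0 < R → 0 < G.gdist x y →
    G.green (G.ball x R) y x ≤ C / G.vol x (G.gdist x y) * G.meanExit (G.ball x R) y

lemma exists_greenExitBound_of_mvg [Infinite V] (hconn : G.toSimpleGraph.Connected)
    (h : G.MVG) : ∃ C, 1 < C ∧ G.GreenExitBound C := by
  obtain ⟨C, hC, hMVG⟩ := h
  refine ⟨C, hC, fun x R y hR hd => (hMVG x R y hR hd).trans ?_⟩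
  refine mul_le_mul_of_nonneg_left ?_ (div_nonneg (by linarith) (G.vol_nonneg _ _))
  rw [tsum_subtype_eq_sum (G.ball_finite hconn x _) fun z => G.green (G.ball x R) y z * G.mu z]
  refine (Finset.sum_le_sum fun z _ => ?_).trans
    (G.sum_expectedVisits_le_meanExit hconn (G.ball_finite hconn x R) _ y)
  rw [green_eq_div, div_mul_cancel₀ _ (G.mu_pos hconn z).ne']

lemma g01_of_mvg [Infinite V] (hconn : G.toSimpleGraph.Connected) (hTC : G.TC) (h : G.MVG) :
    G.G01 := by
  obtain ⟨C, hC, hg⟩ := G.exists_greenExitBound_of_mvg hconn h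
  obtain ⟨CT, hCT, hTC⟩ := hTC
  refine ⟨C * CT, one_lt_mul_of_le_of_lt hC.le hCT, fun x R y hR hd => ?_⟩
  have hV := G.vol_pos hconn x (r := G.gdist x y) (by exact_mod_cast hd)
  by_cases hy : y ∈ G.ball x R
  · calc G.green (G.ball x R) y x
        ≤ C / G.vol x (G.gdist x y) * G.meanExit (G.ball x R) y := hg x R y hR hd
      _ ≤ C / G.vol x (G.gdist x y) * G.mexit y (2 * R) := by
        gcongr
        exact G.meanExit_mono hconn (G.ball_finite hconn y _).coe_toFinset.ge
          (G.ball_subset_ball_of_mem hconn hy) y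
      _ ≤ C / G.vol x (G.gdist x y) * (CT * G.mexit x R) := by
        gcongr
        exact hTC y R hR x (G.mem_ball_comm.mpr hy)
      _ = C * CT * G.mexit x R / G.vol x (G.gdist x y) := by ring
  · rw [G.green_of_notMem_left hy]
    exact div_nonneg (mul_nonneg (by positivity) (G.meanExit_nonneg x)) hV.le

lemma mvg_of_mv [Infinite V] (hconn : G.toSimpleGraph.Connected) (h : G.MV) : G.MVG := by
  obtain ⟨C, hC, hMV⟩ := h
  refine ⟨C + 1, by linarith, fun x R y hR hd => ?_⟩
  have hd' : (0 : ℝ) < G.gdist x y := by exact_mod_cast hd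
  have hV := G.vol_pos hconn x hd'
  have hS : 0 ≤ ∑' z : G.ball x (G.gdist x y), G.green (G.ball x R) y z * G.mu z :=
    tsum_nonneg fun z => mul_nonneg (G.green_nonneg y z) (G.mu_nonneg z)
  by_cases hy : y ∈ G.ball x R
  · have hharm : G.Harmonic (G.ball x (G.gdist x y)) (G.green (G.ball x R) y) :=
      G.harmonic_green hconn (G.ball_finite hconn x R).coe_toFinset.ge (G.ball_mono x hy.le)
        fun h => lt_irrefl (G.gdist x y : ℝ) h
    calc G.green (G.ball x R) y x
        ≤ C / G.vol x (G.gdist x y) * ∑' z : G.ball x (G.gdist x y),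
            G.green (G.ball x R) y z * G.mu z :=
          hMV x _ _ hd' (G.green_nonneg y) hharm
      _ ≤ (C + 1) / G.vol x (G.gdist x y) * ∑' z : G.ball x (G.gdist x y),
            G.green (G.ball x R) y z * G.mu z := by
          gcongr
          linarith
  · rw [G.green_of_notMem_left hy]
    exact mul_nonneg (div_nonneg (by linarith) hV.le) hS

lemma le_div_vol_mul_tsum_of_le_two [Nontrivial V] (hconn : G.toSimpleGraph.Connected) {D : ℝ}
    (hD : 0 ≤ D) {x : V} (hV2 : G.vol x 2 ≤ D * G.mu x) {u : V → ℝ} (hu : ∀ y, 0 ≤ u y)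
    {R : ℝ} (hR : 0 < R) (hR2 : R ≤ 2) :
    u x ≤ D / G.vol x R * ∑' y : G.ball x R, u y * G.mu y := by
  have hself : u x * G.mu x ≤ ∑' y : G.ball x R, u y * G.mu y := by
    rw [tsum_subtype_eq_sum (G.ball_finite hconn x R) fun y => u y * G.mu y]
    exact Finset.single_le_sum (fun y _ => mul_nonneg (hu y) (G.mu_nonneg y))
      (by simpa using G.mem_ball_self x hR)
  rw [div_mul_eq_mul_div, le_div_iff₀ (G.vol_pos hconn x hR)]
  calc u x * G.vol x R ≤ u x * (D * G.mu x) :=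
        mul_le_mul_of_nonneg_left ((G.vol_mono hconn x hR2).trans hV2) (hu x)
    _ = D * (u x * G.mu x) := by ring
    _ ≤ D * ∑' y : G.ball x R, u y * G.mu y := mul_le_mul_of_nonneg_left hself hD

lemma green_ball_le_of_adj_of_notMem [Nontrivial V] (hconn : G.toSimpleGraph.Connected) {C D : ℝ}
    (hC : 0 ≤ C) (hD : 0 ≤ D)
    (hg : G.GreenExitBound C)
    (hVD : ∀ (x : V) (R : ℝ), 0 < R → G.vol x (2 * R) ≤ D * G.vol x R)
    {x w v : V} {R : ℝ} (hR : 2 ≤ R) (hwv : 0 < G.w w v) (hv : v ∉ G.ball x R) :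
    G.green (G.ball x R) w x ≤ C * D / G.vol x R * G.meanExit (G.ball x R) w := by
  have hdw : R - 1 ≤ G.gdist x w := by
    have : (G.gdist x v : ℝ) ≤ G.gdist x w + 1 := by
      exact_mod_cast G.gdist_le_add_one_of_adj hconn x hwv
    have : R ≤ G.gdist x v := not_lt.mp hv
    linarith
  have hdpos : 0 < G.gdist x w := by exact_mod_cast (show (0 : ℝ) < G.gdist x w by linarith)
  have hVd := G.vol_pos hconn x (r := G.gdist x w) (by exact_mod_cast hdpos)
  have hVR : G.vol x R ≤ D * G.vol x (G.gdist x w) :=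
    calc G.vol x R = G.vol x (2 * (R / 2)) := by ring_nf
      _ ≤ D * G.vol x (R / 2) := hVD x _ (by linarith)
      _ ≤ D * G.vol x (G.gdist x w) :=
        mul_le_mul_of_nonneg_left (G.vol_mono hconn x (by linarith)) hD
  have hM := G.meanExit_nonneg (A := G.ball x R) w
  calc G.green (G.ball x R) w x ≤ C / G.vol x (G.gdist x w) * G.meanExit (G.ball x R) w :=
        hg x R w (by linarith) hdpos
    _ ≤ C * D / G.vol x R * G.meanExit (G.ball x R) w := by
        refine mul_le_mul_of_nonneg_right ?_ hM
        rw [div_le_div_iff₀ hVd (G.vol_pos hconn x (by linarith)), mul_assoc]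
        exact mul_le_mul_of_nonneg_left hVR hC

lemma le_div_vol_mul_tsum_of_two_le [Infinite V] (hconn : G.toSimpleGraph.Connected) {C D : ℝ}
    (hC : 0 ≤ C) (hD : 0 ≤ D)
    (hg : G.GreenExitBound C)
    (hVD : ∀ (x : V) (R : ℝ), 0 < R → G.vol x (2 * R) ≤ D * G.vol x R)
    {u : V → ℝ} (hu : ∀ y, 0 ≤ u y) {x : V} {R : ℝ} (hR : 2 ≤ R)
    (hharm : G.Harmonic (G.ball x R) u) :
    u x ≤ C * D / G.vol x R * ∑' y : G.ball x R, u y * G.mu y := by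
  set B := G.ball x R
  have hB : B.Finite := G.ball_finite hconn x R
  have hs : B ⊆ hB.toFinset := hB.coe_toFinset.ge
  have hterm : ∀ w ∈ hB.toFinset, G.expectedVisits B x w * G.laplacianA B u w ≤
      C * D / G.vol x R * (G.mu w * G.laplacianA B u w * G.meanExit B w) := fun w hw => by
    have hwB : w ∈ B := hB.mem_toFinset.mp hw
    have hL := G.laplacianA_nonneg_of_harmonic hs hu hharm hwB
    have hμ := G.mu_nonneg w
    rw [G.expectedVisits_eq_mu_mul_green hconn hs]
    by_cases hL0 : G.laplacianA B u w = 0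
    · simp [hL0]
    obtain ⟨v, hwv, hv⟩ : ∃ v, 0 < G.w w v ∧ v ∉ B := by
      by_contra! hin
      exact hL0 (G.laplacianA_eq_zero_of_harmonic hharm hwB hin)
    calc G.mu w * G.green B w x * G.laplacianA B u w
        ≤ G.mu w * (C * D / G.vol x R * G.meanExit B w) * G.laplacianA B u w := by
          gcongr
          exact G.green_ball_le_of_adj_of_notMem hconn hC hD hg hVD hR hwv hv
      _ = C * D / G.vol x R * (G.mu w * G.laplacianA B u w * G.meanExit B w) := by ring
  calc u x = ∑ w ∈ hB.toFinset, G.expectedVisits B x w * G.laplacianA B u w :=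
        G.eq_sum_expectedVisits_mul_laplacianA hconn hs u (G.mem_ball_self x (by linarith))
    _ ≤ ∑ w ∈ hB.toFinset, C * D / G.vol x R * (G.mu w * G.laplacianA B u w * G.meanExit B w) :=
        Finset.sum_le_sum hterm
    _ = C * D / G.vol x R * ∑' y : B, u y * G.mu y := by
        rw [← Finset.mul_sum, G.sum_mu_mul_laplacianA_mul_meanExit hconn hB,
          tsum_subtype_eq_sum hB fun y => u y * G.mu y]
        simp only [mul_comm (G.mu _)]

lemma mv_of_mvg [Infinite V] (hconn : G.toSimpleGraph.Connected) (hVD : G.VD) (h : G.MVG) :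
    G.MV := by
  obtain ⟨C, hC, hg⟩ := G.exists_greenExitBound_of_mvg hconn h
  obtain ⟨D, hD, hVD⟩ := hVD
  refine ⟨C * D + D, by positivity, fun x R u hR hu hharm => ?_⟩
  have hS : 0 ≤ ∑' y : G.ball x R, u y * G.mu y :=
    tsum_nonneg fun y => mul_nonneg (hu y) (G.mu_nonneg y)
  have hV := G.vol_pos hconn x hR
  rcases le_or_gt R 2 with hR2 | hR2
  · have hV2 : G.vol x 2 ≤ D * G.mu x := by
      simpa [G.vol_one hconn] using hVD x 1 one_pos
    calc u x ≤ D / G.vol x R * ∑' y : G.ball x R, u y * G.mu y :=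
          G.le_div_vol_mul_tsum_of_le_two hconn hD.le hV2 hu hR hR2
      _ ≤ (C * D + D) / G.vol x R * ∑' y : G.ball x R, u y * G.mu y := by
          gcongr
          nlinarith
  · calc u x ≤ C * D / G.vol x R * ∑' y : G.ball x R, u y * G.mu y :=
          G.le_div_vol_mul_tsum_of_two_le hconn (by linarith) hD.le hg hVD hu hR2.le hharm
      _ ≤ (C * D + D) / G.vol x R * ∑' y : G.ball x R, u y * G.mu y := by
          gcongr
          linarith

end WeightedGraph

theorem mvg_iff_mv_imp_g01_general {V : Type*} [Infinite V]
    (G : WeightedGraph V) (hconn : G.toSimpleGraph.Connected)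
    (hVD : G.VD) (hTC : G.TC) :
    (G.MVG ↔ G.MV) ∧ (G.MV → G.G01) :=
  ⟨⟨G.mv_of_mvg hconn hVD, G.mvg_of_mv hconn⟩,
    fun h => G.g01_of_mvg hconn hTC (G.mvg_of_mv hconn h)⟩

/-- **Lemma 3.16.** Under `(p0)`, `(VD)` and `(TC)`: `(MVG) ⇔ (MV) ⇒ (g01)`. -/
theorem mvg_iff_mv_imp_g01 {V : Type*} [Countable V] [Infinite V]
    (G : WeightedGraph V) (hconn : G.toSimpleGraph.Connected)
    (p0 : ℝ) (hp0 : 0 < p0) (hP0 : G.P0 p0) (hVD : G.VD) (hTC : G.TC) :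
    (G.MVG ↔ G.MV) ∧ (G.MV → G.G01) :=
  mvg_iff_mv_imp_g01_general G hconn hVD hTC
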